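/- arXiv:2006.09491 — 5 statements merged into one kernel-verified Lean document; each statement's English description precedes it below -/
import Mathlib

section
/- Let M be a crossingless perfect matching on {1,...,2n} and suppose for some j < i < i+1 < k the pairs (j,i) and (i+1,k) belong to M. Let M' be obtained from M by replacing these with (j,k) and (i,i+1). Then M' is again a crossingless perfect matching, and the nesting number of M' equals the nesting number of M plus 1. -/
/-- A crossingless perfect matching on `{1, ..., 2n}`: a set of pairs
`(a, b)` with `a < b`, with endpoints in `{1, ..., 2n}`, such that every
point of `{1, ..., 2n}` belongs to exactly one pair, and no two pairs
`(i, k)`, `(j, l)` satisfy `i < j < k < l`. -/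
structure CPM (n : ℕ) where
  arcs : Finset (ℕ × ℕ)
  lt : ∀ p ∈ arcs, p.1 < p.2
  endpoints_mem : ∀ p ∈ arcs, p.1 ∈ Finset.Icc 1 (2 * n) ∧ p.2 ∈ Finset.Icc 1 (2 * n)
  cover : ∀ x ∈ Finset.Icc 1 (2 * n), ∃! p : ℕ × ℕ, p ∈ arcs ∧ (x = p.1 ∨ x = p.2)
  noncross : ∀ p ∈ arcs, ∀ q ∈ arcs, ¬(p.1 < q.1 ∧ q.1 < p.2 ∧ p.2 < q.2)

/-- The nesting number of a crossingless matching: the sum over its arcs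
`(a, b)` of the number of arcs `(c, d)` with `c < a < b < d`. -/
def nest {n : ℕ} (M : CPM n) : ℕ :=
  ∑ p ∈ M.arcs, (M.arcs.filter (fun q => q.1 < p.1 ∧ p.2 < q.2)).card

/-- If a crossingless perfect matching `M` contains the unnested adjacent
arcs `(j, i)` and `(i+1, k)` with `j < i < i+1 < k`, then replacing them by
`(j, k)` and `(i, i+1)` yields again a crossingless perfect matching, whose
nesting number is one more than that of `M`. -/
theorem coverMove_nest (n : ℕ) (M : CPM n) (j i k : ℕ)
    (hji : j < i) (hik : i + 1 < k)
    (h1 : (j, i) ∈ M.arcs) (h2 : (i + 1, k) ∈ M.arcs) :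
    ∃ M' : CPM n,
      M'.arcs = (M.arcs \ {(j, i), (i + 1, k)}) ∪ {(j, k), (i, i + 1)} ∧
      nest M' = nest M + 1 := by
  classical
  -- uniqueness of arc at a point
  have huniq : ∀ p ∈ M.arcs, ∀ q ∈ M.arcs, ∀ x : ℕ,
      (x = p.1 ∨ x = p.2) → (x = q.1 ∨ x = q.2) → p = q := by
    intro p hp q hq x hxp hxq
    have hx : x ∈ Finset.Icc 1 (2 * n) := by
      rcases hxp with h | h <;> rw [h]
      · exact (M.endpoints_mem p hp).1
      · exact (M.endpoints_mem p hp).2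
    obtain ⟨r, _, hr⟩ := M.cover x hx
    rw [hr p ⟨hp, hxp⟩, hr q ⟨hq, hxq⟩]
  -- endpoints of other arcs avoid j, i, i+1, k
  have hepne : ∀ p ∈ M.arcs, p ≠ (j, i) → p ≠ (i + 1, k) →
      p.1 ≠ j ∧ p.1 ≠ i ∧ p.1 ≠ i + 1 ∧ p.1 ≠ k ∧
      p.2 ≠ j ∧ p.2 ≠ i ∧ p.2 ≠ i + 1 ∧ p.2 ≠ k := by
    intro p hp hp1 hp2
    refine ⟨?_, ?_, ?_, ?_, ?_, ?_, ?_, ?_⟩ <;> intro h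
    · exact hp1 (huniq p hp (j, i) h1 p.1 (Or.inl rfl) (Or.inl h))
    · exact hp1 (huniq p hp (j, i) h1 p.1 (Or.inl rfl) (Or.inr h))
    · exact hp2 (huniq p hp (i + 1, k) h2 p.1 (Or.inl rfl) (Or.inl h))
    · exact hp2 (huniq p hp (i + 1, k) h2 p.1 (Or.inl rfl) (Or.inr h))
    · exact hp1 (huniq p hp (j, i) h1 p.2 (Or.inr rfl) (Or.inl h))
    · exact hp1 (huniq p hp (j, i) h1 p.2 (Or.inr rfl) (Or.inr h))
    · exact hp2 (huniq p hp (i + 1, k) h2 p.2 (Or.inr rfl) (Or.inl h))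
    · exact hp2 (huniq p hp (i + 1, k) h2 p.2 (Or.inr rfl) (Or.inr h))
  -- noncrossing facts relative to the two arcs
  have hnc : ∀ p ∈ M.arcs,
      ¬(p.1 < j ∧ j < p.2 ∧ p.2 < i) ∧ ¬(j < p.1 ∧ p.1 < i ∧ i < p.2) ∧
      ¬(p.1 < i + 1 ∧ i + 1 < p.2 ∧ p.2 < k) ∧ ¬(i + 1 < p.1 ∧ p.1 < k ∧ k < p.2) :=
    fun p hp => ⟨M.noncross p hp (j, i) h1, M.noncross (j, i) h1 p hp,
      M.noncross p hp (i + 1, k) h2, M.noncross (i + 1, k) h2 p hp⟩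
  -- membership in the new arc set
  have hmem : ∀ p : ℕ × ℕ,
      p ∈ (M.arcs \ {(j, i), (i + 1, k)}) ∪ {(j, k), (i, i + 1)} ↔
      (p ∈ M.arcs ∧ p ≠ (j, i) ∧ p ≠ (i + 1, k)) ∨ p = (j, k) ∨ p = (i, i + 1) := by
    intro p
    simp only [Finset.mem_union, Finset.mem_sdiff, Finset.mem_insert, Finset.mem_singleton]
    tauto
  -- the four structure fields
  have hlt : ∀ p ∈ (M.arcs \ {(j, i), (i + 1, k)}) ∪ {(j, k), (i, i + 1)}, p.1 < p.2 := by
    intro p hp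
    rcases (hmem p).1 hp with ⟨hp, _, _⟩ | rfl | rfl
    · exact M.lt p hp
    · show j < k; omega
    · show i < i + 1; omega
  have hep : ∀ p ∈ (M.arcs \ {(j, i), (i + 1, k)}) ∪ {(j, k), (i, i + 1)},
      p.1 ∈ Finset.Icc 1 (2 * n) ∧ p.2 ∈ Finset.Icc 1 (2 * n) := by
    intro p hp
    rcases (hmem p).1 hp with ⟨hp, _, _⟩ | rfl | rfl
    · exact M.endpoints_mem p hp
    · exact ⟨(M.endpoints_mem _ h1).1, (M.endpoints_mem _ h2).2⟩
    · exact ⟨(M.endpoints_mem _ h1).2, (M.endpoints_mem _ h2).1⟩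
  -- uniqueness helper for the new arc set
  have huniq' : ∀ p q : ℕ × ℕ,
      ((p ∈ M.arcs ∧ p ≠ (j, i) ∧ p ≠ (i + 1, k)) ∨ p = (j, k) ∨ p = (i, i + 1)) →
      ((q ∈ M.arcs ∧ q ≠ (j, i) ∧ q ≠ (i + 1, k)) ∨ q = (j, k) ∨ q = (i, i + 1)) →
      ∀ x : ℕ, (x = p.1 ∨ x = p.2) → (x = q.1 ∨ x = q.2) → p = q := by
    intro p q hp hq x hxp hxq
    rcases hp with ⟨hp, hp1, hp2⟩ | rfl | rfl <;> rcases hq with ⟨hq, hq1, hq2⟩ | rfl | rfl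
    · exact huniq p hp q hq x hxp hxq
    · exfalso
      obtain ⟨e1, e2, e3, e4, e5, e6, e7, e8⟩ := hepne p hp hp1 hp2
      have hxq' : x = j ∨ x = k := hxq
      omega
    · exfalso
      obtain ⟨e1, e2, e3, e4, e5, e6, e7, e8⟩ := hepne p hp hp1 hp2
      have hxq' : x = i ∨ x = i + 1 := hxq
      omega
    · exfalso
      obtain ⟨e1, e2, e3, e4, e5, e6, e7, e8⟩ := hepne q hq hq1 hq2
      have hxp' : x = j ∨ x = k := hxp
      omega
    · rfl
    · exfalso
      have hxp' : x = j ∨ x = k := hxp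
      have hxq' : x = i ∨ x = i + 1 := hxq
      omega
    · exfalso
      obtain ⟨e1, e2, e3, e4, e5, e6, e7, e8⟩ := hepne q hq hq1 hq2
      have hxp' : x = i ∨ x = i + 1 := hxp
      omega
    · exfalso
      have hxp' : x = i ∨ x = i + 1 := hxp
      have hxq' : x = j ∨ x = k := hxq
      omega
    · rfl
  have hcov : ∀ x ∈ Finset.Icc 1 (2 * n),
      ∃! p : ℕ × ℕ, p ∈ (M.arcs \ {(j, i), (i + 1, k)}) ∪ {(j, k), (i, i + 1)} ∧
        (x = p.1 ∨ x = p.2) := by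
    intro x hx
    obtain ⟨p, ⟨hp, hxp⟩, _⟩ := M.cover x hx
    by_cases hpr1 : p = (j, i)
    · subst hpr1
      have hxp' : x = j ∨ x = i := hxp
      rcases hxp' with hxe | hxe
      · refine ⟨(j, k), ⟨(hmem _).2 (Or.inr (Or.inl rfl)), Or.inl hxe⟩, ?_⟩
        rintro q ⟨hq, hxq⟩
        exact huniq' q (j, k) ((hmem q).1 hq) (Or.inr (Or.inl rfl)) x hxq (Or.inl hxe)
      · refine ⟨(i, i + 1), ⟨(hmem _).2 (Or.inr (Or.inr rfl)), Or.inl hxe⟩, ?_⟩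
        rintro q ⟨hq, hxq⟩
        exact huniq' q (i, i + 1) ((hmem q).1 hq) (Or.inr (Or.inr rfl)) x hxq (Or.inl hxe)
    · by_cases hpr2 : p = (i + 1, k)
      · subst hpr2
        have hxp' : x = i + 1 ∨ x = k := hxp
        rcases hxp' with hxe | hxe
        · refine ⟨(i, i + 1), ⟨(hmem _).2 (Or.inr (Or.inr rfl)), Or.inr hxe⟩, ?_⟩
          rintro q ⟨hq, hxq⟩
          exact huniq' q (i, i + 1) ((hmem q).1 hq) (Or.inr (Or.inr rfl)) x hxq (Or.inr hxe)
        · refine ⟨(j, k), ⟨(hmem _).2 (Or.inr (Or.inl rfl)), Or.inr hxe⟩, ?_⟩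
          rintro q ⟨hq, hxq⟩
          exact huniq' q (j, k) ((hmem q).1 hq) (Or.inr (Or.inl rfl)) x hxq (Or.inr hxe)
      · refine ⟨p, ⟨(hmem p).2 (Or.inl ⟨hp, hpr1, hpr2⟩), hxp⟩, ?_⟩
        rintro q ⟨hq, hxq⟩
        exact huniq' q p ((hmem q).1 hq) (Or.inl ⟨hp, hpr1, hpr2⟩) x hxq hxp
  have hnc' : ∀ p ∈ (M.arcs \ {(j, i), (i + 1, k)}) ∪ {(j, k), (i, i + 1)},
      ∀ q ∈ (M.arcs \ {(j, i), (i + 1, k)}) ∪ {(j, k), (i, i + 1)},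
      ¬(p.1 < q.1 ∧ q.1 < p.2 ∧ p.2 < q.2) := by
    intro p hp q hq
    rcases (hmem p).1 hp with ⟨hp, hp1, hp2⟩ | rfl | rfl <;>
      rcases (hmem q).1 hq with ⟨hq, hq1, hq2⟩ | rfl | rfl
    · exact M.noncross p hp q hq
    · show ¬(p.1 < j ∧ j < p.2 ∧ p.2 < k)
      obtain ⟨e1, e2, e3, e4, e5, e6, e7, e8⟩ := hepne p hp hp1 hp2
      obtain ⟨n1, n2, n3, n4⟩ := hnc p hp
      omega
    · show ¬(p.1 < i ∧ i < p.2 ∧ p.2 < i + 1)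
      omega
    · show ¬(j < q.1 ∧ q.1 < k ∧ k < q.2)
      obtain ⟨e1, e2, e3, e4, e5, e6, e7, e8⟩ := hepne q hq hq1 hq2
      obtain ⟨n1, n2, n3, n4⟩ := hnc q hq
      omega
    · show ¬(j < j ∧ j < k ∧ k < k); omega
    · show ¬(j < i ∧ i < k ∧ k < i + 1); omega
    · show ¬(i < q.1 ∧ q.1 < i + 1 ∧ i + 1 < q.2); omega
    · show ¬(i < j ∧ j < i + 1 ∧ i + 1 < k); omega
    · show ¬(i < i ∧ i < i + 1 ∧ i + 1 < i + 1); omega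
  -- the nesting number computation
  have hnest : ∀ M' : CPM n,
      M'.arcs = (M.arcs \ {(j, i), (i + 1, k)}) ∪ {(j, k), (i, i + 1)} →
      nest M' = nest M + 1 := by
    intro M' hM'
    set B := M.arcs \ {((j, i) : ℕ × ℕ), (i + 1, k)} with hBdef
    have hr12 : ((j, i) : ℕ × ℕ) ≠ (i + 1, k) := by
      simp only [ne_eq, Prod.mk.injEq, not_and]; omega
    have hs12 : ((j, k) : ℕ × ℕ) ≠ (i, i + 1) := by
      simp only [ne_eq, Prod.mk.injEq, not_and]; omega
    have hsub : ({(j, i), (i + 1, k)} : Finset (ℕ × ℕ)) ⊆ M.arcs := by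
      intro p hp
      rcases Finset.mem_insert.1 hp with rfl | hp
      · exact h1
      · rw [Finset.mem_singleton.1 hp]; exact h2
    have hBmem : ∀ q ∈ B, q ∈ M.arcs ∧ q ≠ (j, i) ∧ q ≠ (i + 1, k) := by
      intro q hq
      have h := Finset.mem_sdiff.1 hq
      refine ⟨h.1, ?_, ?_⟩ <;> intro he <;> exact h.2 (by simp [he])
    have hdisj : Disjoint B ({(j, k), (i, i + 1)} : Finset (ℕ × ℕ)) := by
      rw [Finset.disjoint_right]
      intro p hp hpB
      obtain ⟨hpA, hp1, hp2⟩ := hBmem p hpB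
      obtain ⟨e1, e2, e3, e4, e5, e6, e7, e8⟩ := hepne p hpA hp1 hp2
      rcases Finset.mem_insert.1 hp with rfl | hp
      · exact e1 rfl
      · rw [Finset.mem_singleton.1 hp] at e2; exact e2 rfl
    have hA : M.arcs = B ∪ {(j, i), (i + 1, k)} := (Finset.sdiff_union_of_subset hsub).symm
    have hsplitM : ∀ g : ℕ × ℕ → ℕ,
        ∑ p ∈ M.arcs, g p = (∑ p ∈ B, g p) + (g (j, i) + g (i + 1, k)) := by
      intro g
      conv_lhs => rw [hA]
      rw [Finset.sum_union Finset.sdiff_disjoint, Finset.sum_pair hr12]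
    have hsplitA : ∀ g : ℕ × ℕ → ℕ,
        ∑ p ∈ B ∪ {(j, k), (i, i + 1)}, g p
          = (∑ p ∈ B, g p) + (g (j, k) + g (i, i + 1)) := by
      intro g
      rw [Finset.sum_union hdisj, Finset.sum_pair hs12]
    have hfilM : ∀ a b : ℕ, (M.arcs.filter (fun q => q.1 < a ∧ b < q.2)).card
        = (B.filter (fun q => q.1 < a ∧ b < q.2)).card
          + ((if j < a ∧ b < i then (1 : ℕ) else 0) + (if i + 1 < a ∧ b < k then 1 else 0)) := by
      intro a b
      have hpr : (Finset.filter (fun q => q.1 < a ∧ b < q.2)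
          ({(j, i), (i + 1, k)} : Finset (ℕ × ℕ))).card
          = (if j < a ∧ b < i then (1 : ℕ) else 0) + (if i + 1 < a ∧ b < k then 1 else 0) := by
        rw [Finset.card_filter, Finset.sum_pair hr12]
      conv_lhs => rw [hA]
      rw [Finset.filter_union,
        Finset.card_union_of_disjoint (Finset.disjoint_filter_filter Finset.sdiff_disjoint), hpr]
    have hfilA : ∀ a b : ℕ,
        ((B ∪ {(j, k), (i, i + 1)}).filter (fun q => q.1 < a ∧ b < q.2)).card
        = (B.filter (fun q => q.1 < a ∧ b < q.2)).card
          + ((if j < a ∧ b < k then (1 : ℕ) else 0) + (if i < a ∧ b < i + 1 then 1 else 0)) := by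
      intro a b
      have hpr : (Finset.filter (fun q => q.1 < a ∧ b < q.2)
          ({(j, k), (i, i + 1)} : Finset (ℕ × ℕ))).card
          = (if j < a ∧ b < k then (1 : ℕ) else 0) + (if i < a ∧ b < i + 1 then 1 else 0) := by
        rw [Finset.card_filter, Finset.sum_pair hs12]
      rw [Finset.filter_union,
        Finset.card_union_of_disjoint (Finset.disjoint_filter_filter hdisj), hpr]
    have hq4 : ∀ q ∈ B, ((q.1 < j ∧ i < q.2) ↔ (q.1 < j ∧ k < q.2))
        ∧ ((q.1 < i + 1 ∧ k < q.2) ↔ (q.1 < j ∧ k < q.2))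
        ∧ ((q.1 < i ∧ i + 1 < q.2) ↔ (q.1 < j ∧ k < q.2)) := by
      intro q hq
      obtain ⟨hqA, hq1, hq2⟩ := hBmem q hq
      obtain ⟨e1, e2, e3, e4, e5, e6, e7, e8⟩ := hepne q hqA hq1 hq2
      obtain ⟨n1, n2, n3, n4⟩ := hnc q hqA
      have hl := M.lt q hqA
      refine ⟨?_, ?_, ?_⟩ <;> omega
    have hc1 : (B.filter (fun q => q.1 < j ∧ i < q.2)).card
        = (B.filter (fun q => q.1 < j ∧ k < q.2)).card := by
      rw [Finset.filter_congr (fun q hq => (hq4 q hq).1)]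
    have hc2 : (B.filter (fun q => q.1 < i + 1 ∧ k < q.2)).card
        = (B.filter (fun q => q.1 < j ∧ k < q.2)).card := by
      rw [Finset.filter_congr (fun q hq => (hq4 q hq).2.1)]
    have hc3 : (B.filter (fun q => q.1 < i ∧ i + 1 < q.2)).card
        = (B.filter (fun q => q.1 < j ∧ k < q.2)).card := by
      rw [Finset.filter_congr (fun q hq => (hq4 q hq).2.2)]
    have hT : ∀ p ∈ B,
        ((B ∪ {(j, k), (i, i + 1)}).filter (fun q => q.1 < p.1 ∧ p.2 < q.2)).card
        = (M.arcs.filter (fun q => q.1 < p.1 ∧ p.2 < q.2)).card := by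
      intro p hp
      rw [hfilA p.1 p.2, hfilM p.1 p.2]
      obtain ⟨hpA, hp1, hp2⟩ := hBmem p hp
      obtain ⟨e1, e2, e3, e4, e5, e6, e7, e8⟩ := hepne p hpA hp1 hp2
      obtain ⟨n1, n2, n3, n4⟩ := hnc p hpA
      have hl := M.lt p hpA
      split_ifs <;> omega
    have eM' : nest M'
        = (∑ p ∈ B, (M.arcs.filter (fun q => q.1 < p.1 ∧ p.2 < q.2)).card)
          + (((B.filter (fun q => q.1 < j ∧ k < q.2)).card
            + (B.filter (fun q => q.1 < j ∧ k < q.2)).card) + 1) := by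
      calc nest M'
          = ∑ p ∈ B ∪ {(j, k), (i, i + 1)},
              ((B ∪ {(j, k), (i, i + 1)}).filter (fun q => q.1 < p.1 ∧ p.2 < q.2)).card := by
            simp only [nest, hM']
        _ = (∑ p ∈ B, ((B ∪ {(j, k), (i, i + 1)}).filter (fun q => q.1 < p.1 ∧ p.2 < q.2)).card)
            + (((B ∪ {(j, k), (i, i + 1)}).filter (fun q => q.1 < j ∧ k < q.2)).card
              + ((B ∪ {(j, k), (i, i + 1)}).filter (fun q => q.1 < i ∧ i + 1 < q.2)).card) :=
            hsplitA _
        _ = (∑ p ∈ B, (M.arcs.filter (fun q => q.1 < p.1 ∧ p.2 < q.2)).card)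
            + (((B ∪ {(j, k), (i, i + 1)}).filter (fun q => q.1 < j ∧ k < q.2)).card
              + ((B ∪ {(j, k), (i, i + 1)}).filter (fun q => q.1 < i ∧ i + 1 < q.2)).card) := by
            congr 1
            exact Finset.sum_congr rfl hT
        _ = _ := by
            rw [hfilA j k, hfilA i (i + 1), hc3]
            split_ifs <;> omega
    have eM : nest M
        = (∑ p ∈ B, (M.arcs.filter (fun q => q.1 < p.1 ∧ p.2 < q.2)).card)
          + ((B.filter (fun q => q.1 < j ∧ k < q.2)).card
            + (B.filter (fun q => q.1 < j ∧ k < q.2)).card) := by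
      calc nest M
          = ∑ p ∈ M.arcs, (M.arcs.filter (fun q => q.1 < p.1 ∧ p.2 < q.2)).card := by
            simp only [nest]
        _ = (∑ p ∈ B, (M.arcs.filter (fun q => q.1 < p.1 ∧ p.2 < q.2)).card)
            + ((M.arcs.filter (fun q => q.1 < j ∧ i < q.2)).card
              + (M.arcs.filter (fun q => q.1 < i + 1 ∧ k < q.2)).card) :=
            hsplitM _
        _ = _ := by
            rw [hfilM j i, hfilM (i + 1) k, hc1, hc2]
            split_ifs <;> omega
    rw [eM', eM]; omega
  exact ⟨⟨(M.arcs \ {(j, i), (i + 1, k)}) ∪ {(j, k), (i, i + 1)}, hlt, hep, hcov, hnc'⟩,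
    rfl, hnest _ rfl⟩
end

section
/- Let M and M' be crossingless perfect matchings on {1,...,2n}. If the shadow of M is strictly contained in the shadow of M' (that is, depth_M(x) ≤ depth_{M'}(x) for all real x, with strict inequality somewhere), then the nesting number of M is strictly less than the nesting number of M'. -/
/-- The depth of a point `x : ℝ` with respect to a crossingless matching:
the number of arcs `(i, j)` with `i < x < j`. -/
noncomputable def depth {n : ℕ} (M : CPM n) (x : ℝ) : ℕ :=
  Nat.card {p : ℕ × ℕ // p ∈ M.arcs ∧ (p.1 : ℝ) < x ∧ x < (p.2 : ℝ)}

open Finset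

open Classical in
/-- The set of arcs strictly containing the real point `x`. -/
noncomputable def rdep {n : ℕ} (M : CPM n) (x : ℝ) : Finset (ℕ × ℕ) :=
  M.arcs.filter (fun p => (p.1 : ℝ) < x ∧ x < (p.2 : ℝ))

lemma depth_eq_rdep {n : ℕ} (M : CPM n) (x : ℝ) : depth M x = (rdep M x).card := by
  classical
  have e : {p : ℕ × ℕ // p ∈ M.arcs ∧ (p.1 : ℝ) < x ∧ x < (p.2 : ℝ)}
      ≃ {p : ℕ × ℕ // p ∈ rdep M x} :=
    Equiv.subtypeEquivRight (by intro p; simp [rdep])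
  rw [depth, Nat.card_congr e, Nat.card_eq_finsetCard]

/-- depth at half-integer points as a plain finset card. -/
def Dk {n : ℕ} (M : CPM n) (k : ℕ) : ℕ :=
  (M.arcs.filter (fun p => p.1 ≤ k ∧ k < p.2)).card

lemma depth_half {n : ℕ} (M : CPM n) (k : ℕ) :
    depth M ((k : ℝ) + 1/2) = Dk M k := by
  classical
  rw [depth_eq_rdep, rdep, Dk]
  congr 1
  apply Finset.filter_congr
  intro p hp
  constructor
  · rintro ⟨h1, h2⟩
    have ha : (p.1 : ℝ) < (k : ℝ) + 1 := by linarith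
    have hb : (k : ℝ) < (p.2 : ℝ) := by linarith
    constructor
    · have : p.1 < k + 1 := by exact_mod_cast ha
      omega
    · exact_mod_cast hb
  · rintro ⟨h1, h2⟩
    have ha : (p.1 : ℝ) ≤ (k : ℝ) := by exact_mod_cast h1
    have hb : (k : ℝ) + 1 ≤ (p.2 : ℝ) := by exact_mod_cast h2
    constructor <;> linarith

/-- Two arcs sharing an endpoint are equal. -/
lemma eq_of_shared {n : ℕ} (M : CPM n) {p q : ℕ × ℕ} (hp : p ∈ M.arcs) (hq : q ∈ M.arcs)
    {y : ℕ} (hyp : y = p.1 ∨ y = p.2) (hyq : y = q.1 ∨ y = q.2) : p = q := by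
  have hy : y ∈ Finset.Icc 1 (2 * n) := by
    rcases hyp with h | h
    · rw [h]; exact (M.endpoints_mem p hp).1
    · rw [h]; exact (M.endpoints_mem p hp).2
  obtain ⟨r, -, hu⟩ := M.cover y hy
  exact (hu p ⟨hp, hyp⟩).trans (hu q ⟨hq, hyq⟩).symm

/-- The interior of an arc is the disjoint union of endpoints of the arcs nested inside. -/
lemma Ioo_eq_biUnion {n : ℕ} (M : CPM n) {p : ℕ × ℕ} (hp : p ∈ M.arcs) :
    Finset.Ioo p.1 p.2 =
      (M.arcs.filter (fun q => p.1 < q.1 ∧ q.2 < p.2)).biUnion (fun q => {q.1, q.2}) := by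
  ext x
  simp only [Finset.mem_Ioo, Finset.mem_biUnion, Finset.mem_filter, Finset.mem_insert,
    Finset.mem_singleton]
  constructor
  · rintro ⟨hx1, hx2⟩
    have hp1 : 1 ≤ p.1 := (Finset.mem_Icc.mp (M.endpoints_mem p hp).1).1
    have hp2 : p.2 ≤ 2 * n := (Finset.mem_Icc.mp (M.endpoints_mem p hp).2).2
    have hxI : x ∈ Finset.Icc 1 (2 * n) := Finset.mem_Icc.mpr ⟨by omega, by omega⟩
    obtain ⟨q, ⟨hq, hxq⟩, -⟩ := M.cover x hxI
    have hqlt := M.lt q hq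
    have hne : q ≠ p := by
      intro h; subst h
      rcases hxq with h | h <;> omega
    refine ⟨q, ⟨hq, ?_, ?_⟩, ?_⟩
    · -- p.1 < q.1
      rcases hxq with h | h
      · omega
      · -- x = q.2
        have h1 : q.1 ≠ p.1 := fun hcontra =>
          hne (eq_of_shared M hq hp (Or.inl rfl) (Or.inl hcontra))
        by_contra hc
        push_neg at hc
        have : q.1 < p.1 := lt_of_le_of_ne hc h1
        exact M.noncross q hq p hp ⟨this, by omega, by omega⟩
    · -- q.2 < p.2
      rcases hxq with h | h
      · -- x = q.1
        have h2 : q.2 ≠ p.2 := fun hcontra =>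
          hne (eq_of_shared M hq hp (Or.inr rfl) (Or.inr hcontra))
        by_contra hc
        push_neg at hc
        have : p.2 < q.2 := lt_of_le_of_ne hc (Ne.symm h2)
        exact M.noncross p hp q hq ⟨by omega, by omega, this⟩
      · omega
    · tauto
  · rintro ⟨q, ⟨hq, h1, h2⟩, hx⟩
    have hqlt := M.lt q hq
    rcases hx with h | h <;> omega

lemma card_pair {n : ℕ} (M : CPM n) {q : ℕ × ℕ} (hq : q ∈ M.arcs) :
    ({q.1, q.2} : Finset ℕ).card = 2 := by
  have := M.lt q hq
  rw [Finset.card_insert_of_notMem (by simp; omega), Finset.card_singleton]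

lemma pairwise_disj {n : ℕ} (M : CPM n) {s : Finset (ℕ × ℕ)} (hs : s ⊆ M.arcs) :
    ∀ q ∈ s, ∀ q' ∈ s, q ≠ q' →
      Disjoint ({q.1, q.2} : Finset ℕ) ({q'.1, q'.2} : Finset ℕ) := by
  intro q hq q' hq' hne
  rw [Finset.disjoint_left]
  intro y hy hy'
  simp only [Finset.mem_insert, Finset.mem_singleton] at hy hy'
  exact hne (eq_of_shared M (hs hq) (hs hq') hy hy')

/-- The length of an arc is odd: twice the number of nested arcs plus one. -/
lemma arc_gap {n : ℕ} (M : CPM n) {p : ℕ × ℕ} (hp : p ∈ M.arcs) :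
    p.2 - p.1 = 2 * (M.arcs.filter (fun q => p.1 < q.1 ∧ q.2 < p.2)).card + 1 := by
  have hlt := M.lt p hp
  have hcard : (Finset.Ioo p.1 p.2).card =
      2 * (M.arcs.filter (fun q => p.1 < q.1 ∧ q.2 < p.2)).card := by
    rw [Ioo_eq_biUnion M hp,
      Finset.card_biUnion (pairwise_disj M (Finset.filter_subset _ _))]
    rw [Finset.sum_congr rfl (fun q hq => card_pair M (Finset.mem_of_mem_filter q hq))]
    rw [Finset.sum_const, smul_eq_mul, mul_comm]
  rw [Nat.card_Ioo] at hcard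
  omega

lemma card_arcs {n : ℕ} (M : CPM n) : M.arcs.card = n := by
  have hU : Finset.Icc 1 (2 * n) = M.arcs.biUnion (fun q => {q.1, q.2}) := by
    ext x
    simp only [Finset.mem_biUnion, Finset.mem_insert, Finset.mem_singleton]
    constructor
    · intro hx
      obtain ⟨q, ⟨hq, hxq⟩, -⟩ := M.cover x hx
      exact ⟨q, hq, hxq⟩
    · rintro ⟨q, hq, hx⟩
      rcases hx with h | h
      · rw [h]; exact (M.endpoints_mem q hq).1
      · rw [h]; exact (M.endpoints_mem q hq).2
  have h2 : (Finset.Icc 1 (2 * n)).card = 2 * M.arcs.card := by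
    rw [hU, Finset.card_biUnion (pairwise_disj M (Finset.Subset.refl _)),
      Finset.sum_congr rfl (fun q hq => card_pair M hq), Finset.sum_const, smul_eq_mul,
      mul_comm]
  rw [Nat.card_Icc] at h2
  omega

/-- The key identity: the total shadow area equals twice the nesting number plus `n`. -/
lemma sum_Dk {n : ℕ} (M : CPM n) :
    ∑ k ∈ Finset.range (2 * n + 1), Dk M k = 2 * nest M + n := by
  classical
  have h1 : ∑ k ∈ Finset.range (2 * n + 1), Dk M k = ∑ p ∈ M.arcs, (p.2 - p.1) := by
    unfold Dk
    simp_rw [Finset.card_filter]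
    rw [Finset.sum_comm]
    refine Finset.sum_congr rfl fun p hp => ?_
    rw [← Finset.card_filter]
    have hp2 : p.2 ≤ 2 * n := (Finset.mem_Icc.mp (M.endpoints_mem p hp).2).2
    have : (Finset.range (2 * n + 1)).filter (fun k => p.1 ≤ k ∧ k < p.2)
        = Finset.Ico p.1 p.2 := by
      ext k
      simp only [Finset.mem_filter, Finset.mem_range, Finset.mem_Ico]
      omega
    rw [this, Nat.card_Ico]
  have h2 : ∑ p ∈ M.arcs, (p.2 - p.1)
      = 2 * (∑ p ∈ M.arcs, (M.arcs.filter (fun q => p.1 < q.1 ∧ q.2 < p.2)).card) + n := by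
    rw [Finset.sum_congr rfl (fun p hp => arc_gap M hp)]
    rw [Finset.sum_add_distrib, Finset.sum_const, smul_eq_mul, mul_one, card_arcs,
      ← Finset.mul_sum]
  have h3 : ∑ p ∈ M.arcs, (M.arcs.filter (fun q => p.1 < q.1 ∧ q.2 < p.2)).card = nest M := by
    unfold nest
    simp_rw [Finset.card_filter]
    rw [Finset.sum_comm]
  rw [h1, h2, h3]

/-- depth at an integer point, as a finset card. -/
lemma depth_int {n : ℕ} (M : CPM n) (m : ℕ) :
    depth M (m : ℝ) = (M.arcs.filter (fun p => p.1 < m ∧ m < p.2)).card := by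
  classical
  rw [depth_eq_rdep, rdep]
  congr 1
  apply Finset.filter_congr
  intro p hp
  constructor
  · rintro ⟨h1, h2⟩; exact ⟨by exact_mod_cast h1, by exact_mod_cast h2⟩
  · rintro ⟨h1, h2⟩; exact ⟨by exact_mod_cast h1, by exact_mod_cast h2⟩

/-- The two half-integer depths around a covered integer point `m`. -/
lemma Dk_split {n : ℕ} (M : CPM n) {m : ℕ} (hm : m ∈ Finset.Icc 1 (2 * n)) :
    Dk M (m - 1) + Dk M m
      = 2 * (M.arcs.filter (fun p => p.1 < m ∧ m < p.2)).card + 1 := by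
  classical
  have hm1 : 1 ≤ m := (Finset.mem_Icc.mp hm).1
  have hCl : Dk M (m - 1)
      = (M.arcs.filter (fun p => p.1 < m ∧ m < p.2)).card
        + (M.arcs.filter (fun p => p.2 = m)).card := by
    unfold Dk
    simp_rw [Finset.card_filter]
    rw [← Finset.sum_add_distrib]
    refine Finset.sum_congr rfl fun p hp => ?_
    have := M.lt p hp
    split_ifs <;> omega
  have hOp : Dk M m
      = (M.arcs.filter (fun p => p.1 < m ∧ m < p.2)).card
        + (M.arcs.filter (fun p => p.1 = m)).card := by
    unfold Dk
    simp_rw [Finset.card_filter]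
    rw [← Finset.sum_add_distrib]
    refine Finset.sum_congr rfl fun p hp => ?_
    have := M.lt p hp
    split_ifs <;> omega
  have hone : (M.arcs.filter (fun p => p.2 = m)).card
      + (M.arcs.filter (fun p => p.1 = m)).card = 1 := by
    obtain ⟨p₀, hp₀, hu⟩ := M.cover m hm
    have hsingle : M.arcs.filter (fun p => p.1 = m ∨ p.2 = m) = {p₀} := by
      ext q
      simp only [Finset.mem_filter, Finset.mem_singleton]
      constructor
      · rintro ⟨hq, hor⟩
        exact hu q ⟨hq, by tauto⟩
      · rintro rfl
        exact ⟨hp₀.1, by tauto⟩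
    have : (M.arcs.filter (fun p => p.1 = m ∨ p.2 = m)).card = 1 := by
      rw [hsingle, Finset.card_singleton]
    rw [← this]
    simp_rw [Finset.card_filter]
    rw [← Finset.sum_add_distrib]
    refine (Finset.sum_congr rfl fun p hp => ?_).symm
    have := M.lt p hp
    split_ifs <;> omega
  omega

/-- If the shadow of a crossingless perfect matching `M` is strictly
contained in the shadow of `M'` (pointwise smaller depth, strictly somewhere),
then the nesting number of `M` is strictly smaller than that of `M'`. -/
theorem nest_lt_of_shadow_ssubset (n : ℕ) (M M' : CPM n)
    (hle : ∀ x : ℝ, depth M x ≤ depth M' x)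
    (hlt : ∃ x : ℝ, depth M x < depth M' x) :
    nest M < nest M' := by
  classical
  obtain ⟨x, hx⟩ := hlt
  -- find an arc of M' containing x
  have hpos : 0 < (rdep M' x).card := by
    rw [← depth_eq_rdep]; exact lt_of_le_of_lt (Nat.zero_le _) hx
  obtain ⟨p', hp'⟩ := Finset.card_pos.mp hpos
  rw [rdep, Finset.mem_filter] at hp'
  obtain ⟨hp'arcs, hp'1, hp'2⟩ := hp'
  have hp'bounds := M'.endpoints_mem p' hp'arcs
  have hb1 : 1 ≤ p'.1 := (Finset.mem_Icc.mp hp'bounds.1).1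
  have hb2 : p'.2 ≤ 2 * n := (Finset.mem_Icc.mp hp'bounds.2).2
  have hx1 : (1 : ℝ) ≤ (p'.1 : ℝ) := by exact_mod_cast hb1
  have hx2 : (p'.2 : ℝ) ≤ 2 * n := by exact_mod_cast hb2
  -- key: there is a half-integer strict point
  have hkey : ∃ k : ℕ, Dk M k < Dk M' k := by
    by_cases hint : ∃ m : ℕ, (m : ℝ) = x
    · obtain ⟨m, rfl⟩ := hint
      have hc1 : p'.1 < m := by exact_mod_cast hp'1
      have hc2 : m < p'.2 := by exact_mod_cast hp'2
      have hmI : m ∈ Finset.Icc 1 (2 * n) := Finset.mem_Icc.mpr ⟨by omega, by omega⟩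
      have hdM := depth_int M m
      have hdM' := depth_int M' m
      have hsplitM := Dk_split M hmI
      have hsplitM' := Dk_split M' hmI
      have hle1 : Dk M (m - 1) ≤ Dk M' (m - 1) := by
        rw [← depth_half, ← depth_half]; exact hle _
      have hle2 : Dk M m ≤ Dk M' m := by
        rw [← depth_half, ← depth_half]; exact hle _
      rw [hdM, hdM'] at hx
      by_contra hc
      push_neg at hc
      have h1 := hc (m - 1)
      have h2 := hc m
      omega
    · -- non-integer case
      push_neg at hint
      set k : ℕ := ⌊x⌋.toNat with hk
      have hxpos : (1 : ℝ) ≤ x := le_of_lt (lt_of_le_of_lt hx1 hp'1)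
      have hfl : (0 : ℤ) ≤ ⌊x⌋ := by
        have : (0 : ℝ) ≤ x := by linarith
        exact Int.floor_nonneg.mpr this
      have hkx : (k : ℝ) ≤ x := by
        rw [hk]
        have : ((⌊x⌋.toNat : ℤ) : ℝ) = (⌊x⌋ : ℝ) := by
          rw [Int.toNat_of_nonneg hfl]
        rw [show ((⌊x⌋.toNat : ℕ) : ℝ) = ((⌊x⌋.toNat : ℤ) : ℝ) by push_cast; ring, this]
        exact Int.floor_le x
      have hkne : (k : ℝ) ≠ x := fun h => hint k h
      have hkltx : (k : ℝ) < x := lt_of_le_of_ne hkx hkne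
      have hxlt : x < (k : ℝ) + 1 := by
        rw [hk]
        have : ((⌊x⌋.toNat : ℤ) : ℝ) = (⌊x⌋ : ℝ) := by
          rw [Int.toNat_of_nonneg hfl]
        rw [show ((⌊x⌋.toNat : ℕ) : ℝ) = ((⌊x⌋.toNat : ℤ) : ℝ) by push_cast; ring, this]
        exact Int.lt_floor_add_one x
      have heq : ∀ (N : CPM n), depth N x = Dk N k := by
        intro N
        rw [depth_eq_rdep, rdep, Dk]
        congr 1
        apply Finset.filter_congr
        intro p hp
        constructor
        · rintro ⟨h1, h2⟩
          constructor
          · have : (p.1 : ℝ) < (k : ℝ) + 1 := by linarith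
            have : p.1 < k + 1 := by exact_mod_cast this
            omega
          · have : (k : ℝ) < (p.2 : ℝ) := by linarith
            exact_mod_cast this
        · rintro ⟨h1, h2⟩
          have ha : (p.1 : ℝ) ≤ (k : ℝ) := by exact_mod_cast h1
          have hb : (k : ℝ) + 1 ≤ (p.2 : ℝ) := by exact_mod_cast h2
          constructor <;> linarith
      exact ⟨k, by rw [← heq M, ← heq M']; exact hx⟩
  obtain ⟨k₀, hk₀⟩ := hkey
  -- k₀ is in range
  have hk₀mem : k₀ ∈ Finset.range (2 * n + 1) := by
    have hpos' : 0 < Dk M' k₀ := lt_of_le_of_lt (Nat.zero_le _) hk₀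
    rw [Dk] at hpos'
    obtain ⟨q, hq⟩ := Finset.card_pos.mp hpos'
    rw [Finset.mem_filter] at hq
    have : q.2 ≤ 2 * n := (Finset.mem_Icc.mp (M'.endpoints_mem q hq.1).2).2
    rw [Finset.mem_range]
    omega
  have hsum : ∑ k ∈ Finset.range (2 * n + 1), Dk M k
      < ∑ k ∈ Finset.range (2 * n + 1), Dk M' k := by
    apply Finset.sum_lt_sum
    · intro i _
      rw [← depth_half, ← depth_half]; exact hle _
    · exact ⟨k₀, hk₀mem, hk₀⟩
  rw [sum_Dk, sum_Dk] at hsum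
  omega
end

section
/- Let M, M' be crossingless perfect matchings on {1,...,2n} with M ≠ M' and depth_M(x) ≤ depth_{M'}(x) for all x. Then there exists a chain M = M_0, M_1, ..., M_k = M' of crossingless perfect matchings such that each M_{t+1} is obtained from M_t by replacing a pair of arcs (j,i),(i+1,k) (with j < i < i+1 < k) by the arcs (j,k),(i,i+1). In other words, shadow containment implies the tableau partial order for sl2 webs. -/
/-- The covering move on crossingless perfect matchings: replace a pair of
unnested adjacent arcs `(j, i)`, `(i+1, k)` (with `j < i < i+1 < k`) by the
nested arcs `(j, k)`, `(i, i+1)`. -/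
def CoverMove {n : ℕ} (M M' : CPM n) : Prop :=
  ∃ j i k : ℕ, j < i ∧ i + 1 < k ∧ (j, i) ∈ M.arcs ∧ (i + 1, k) ∈ M.arcs ∧
    M'.arcs = (M.arcs \ {(j, i), (i + 1, k)}) ∪ {(j, k), (i, i + 1)}

namespace CPMaux

variable {n : ℕ}

/-- Depth at half-integer points, combinatorially. -/
def dnat (M : CPM n) (m : ℕ) : ℕ :=
  (M.arcs.filter (fun p => p.1 ≤ m ∧ m < p.2)).card

lemma ep1 {M : CPM n} {p : ℕ × ℕ} (hp : p ∈ M.arcs) : 1 ≤ p.1 ∧ p.1 ≤ 2*n := by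
  have := (M.endpoints_mem p hp).1; exact Finset.mem_Icc.mp this

lemma ep2 {M : CPM n} {p : ℕ × ℕ} (hp : p ∈ M.arcs) : 1 ≤ p.2 ∧ p.2 ≤ 2*n := by
  have := (M.endpoints_mem p hp).2; exact Finset.mem_Icc.mp this

/-- Two arcs sharing an endpoint are equal. -/
lemma shared {M : CPM n} {p q : ℕ × ℕ} (hp : p ∈ M.arcs) (hq : q ∈ M.arcs)
    {x : ℕ} (hxp : x = p.1 ∨ x = p.2) (hxq : x = q.1 ∨ x = q.2) : p = q := by
  have hx : x ∈ Finset.Icc 1 (2*n) := by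
    rcases hxp with h | h
    · rw [h]; exact (M.endpoints_mem p hp).1
    · rw [h]; exact (M.endpoints_mem p hp).2
  obtain ⟨r, -, hu⟩ := M.cover x hx
  rw [hu p ⟨hp, hxp⟩, hu q ⟨hq, hxq⟩]

lemma depth_half (M : CPM n) (m : ℕ) : depth M ((m : ℝ) + 1/2) = dnat M m := by
  unfold depth dnat
  have key : ∀ p : ℕ × ℕ,
      (p ∈ M.arcs ∧ ((p.1:ℝ) < (m:ℝ) + 1/2 ∧ (m:ℝ) + 1/2 < (p.2:ℝ)))
      ↔ p ∈ M.arcs.filter (fun p => p.1 ≤ m ∧ m < p.2) := by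
    intro p
    simp only [Finset.mem_filter]
    constructor
    · rintro ⟨h1, h2, h3⟩
      refine ⟨h1, ?_, ?_⟩
      · by_contra hc; push_neg at hc
        have : (m:ℝ) + 1 ≤ (p.1:ℝ) := by exact_mod_cast hc
        linarith
      · by_contra hc; push_neg at hc
        have : (p.2:ℝ) ≤ (m:ℝ) := by exact_mod_cast hc
        linarith
    · rintro ⟨h1, h2, h3⟩
      have h2' : (p.1:ℝ) ≤ (m:ℝ) := by exact_mod_cast h2
      have h3' : (m:ℝ) + 1 ≤ (p.2:ℝ) := by exact_mod_cast h3
      exact ⟨h1, by linarith, by linarith⟩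
  rw [Nat.card_congr (Equiv.subtypeEquivRight key), Nat.card_eq_finsetCard]

lemma dnat_zero (M : CPM n) : dnat M 0 = 0 := by
  unfold dnat
  rw [Finset.card_eq_zero, Finset.filter_eq_empty_iff]
  intro p hp
  have := ep1 hp
  simp only [not_and]
  omega

lemma dnat_big (M : CPM n) {m : ℕ} (hm : 2*n ≤ m) : dnat M m = 0 := by
  unfold dnat
  rw [Finset.card_eq_zero, Finset.filter_eq_empty_iff]
  intro p hp
  have := ep2 hp
  simp only [not_and]
  omega

/-- The step lemma: depth goes up at a left endpoint, down at a right endpoint. -/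
lemma step (M : CPM n) (m : ℕ) (h1 : 1 ≤ m) (h2 : m ≤ 2*n) :
    (∃ b, (m, b) ∈ M.arcs ∧ dnat M m = dnat M (m-1) + 1) ∨
    (∃ a, (a, m) ∈ M.arcs ∧ dnat M (m-1) = dnat M m + 1) := by
  obtain ⟨e, ⟨he, hxe⟩, -⟩ := M.cover m (Finset.mem_Icc.mpr ⟨h1, h2⟩)
  have hlt := M.lt e he
  rcases hxe with h | h
  · -- left endpoint
    left
    refine ⟨e.2, by rw [h]; exact he, ?_⟩
    unfold dnat
    have hset : M.arcs.filter (fun p => p.1 ≤ m ∧ m < p.2)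
        = insert e (M.arcs.filter (fun p => p.1 ≤ m-1 ∧ m-1 < p.2)) := by
      ext p
      simp only [Finset.mem_insert, Finset.mem_filter]
      constructor
      · rintro ⟨hpa, hp1, hp2⟩
        by_cases hpe : p = e
        · exact Or.inl hpe
        · right
          have : p.1 ≠ m := fun hh => hpe (shared hpa he (Or.inl hh.symm) (Or.inl h))
          exact ⟨hpa, by omega, by omega⟩
      · rintro (hpe | ⟨hpa, hp1, hp2⟩)
        · subst hpe; exact ⟨he, by omega, by omega⟩
        · have : p.2 ≠ m := fun hh => by
            have := shared hpa he (Or.inr hh.symm) (Or.inl h)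
            subst this; omega
          exact ⟨hpa, by omega, by omega⟩
    rw [hset, Finset.card_insert_of_notMem]
    simp only [Finset.mem_filter, not_and]
    intro _ hle
    omega
  · -- right endpoint
    right
    refine ⟨e.1, by rw [h]; exact he, ?_⟩
    unfold dnat
    have hset : M.arcs.filter (fun p => p.1 ≤ m-1 ∧ m-1 < p.2)
        = insert e (M.arcs.filter (fun p => p.1 ≤ m ∧ m < p.2)) := by
      ext p
      simp only [Finset.mem_insert, Finset.mem_filter]
      constructor
      · rintro ⟨hpa, hp1, hp2⟩
        by_cases hpe : p = e
        · exact Or.inl hpe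
        · right
          have h2m : p.2 ≠ m := fun hh => hpe (shared hpa he (Or.inr hh.symm) (Or.inr h))
          have h1m : p.1 ≠ m := fun hh => hpe (shared hpa he (Or.inl hh.symm) (Or.inr h))
          exact ⟨hpa, by omega, by omega⟩
      · rintro (hpe | ⟨hpa, hp1, hp2⟩)
        · subst hpe; exact ⟨he, by omega, by omega⟩
        · have h1m : p.1 ≠ m := fun hh => by
            have := shared hpa he (Or.inl hh.symm) (Or.inr h)
            subst this; omega
          exact ⟨hpa, by omega, by omega⟩
    rw [hset, Finset.card_insert_of_notMem]
    simp only [Finset.mem_filter, not_and]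
    intro _ hle
    omega

lemma dnat_parity (M : CPM n) : ∀ m, m ≤ 2*n → Even (dnat M m + m) := by
  intro m
  induction m with
  | zero => intro _; simp [dnat_zero]
  | succ m ih =>
    intro hm
    have ihm := ih (by omega)
    rcases step M (m+1) (by omega) (by omega) with ⟨b, -, hstep⟩ | ⟨a, -, hstep⟩
    · simp only [Nat.add_sub_cancel] at hstep
      obtain ⟨u, hu⟩ := ihm
      exact ⟨u + 1, by omega⟩
    · simp only [Nat.add_sub_cancel] at hstep
      obtain ⟨u, hu⟩ := ihm
      exact ⟨u, by omega⟩

end CPMaux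

namespace CPMaux

variable {n : ℕ}

/-- Any arc strictly containing the left end of `(a,b)` extends past `b`. -/
lemma outer {M : CPM n} {a b : ℕ} (hab : (a, b) ∈ M.arcs) {p : ℕ × ℕ}
    (hp : p ∈ M.arcs) (h1 : p.1 < a) (h2 : a ≤ p.2) : b < p.2 := by
  have hltab := M.lt _ hab
  have h2a : p.2 ≠ a := by
    intro hh
    have := shared hp hab (Or.inr rfl) (Or.inl hh)
    subst this; simp at h1
  have h2b : p.2 ≠ b := by
    intro hh
    have := shared hp hab (Or.inr rfl) (Or.inr hh)
    subst this; simp at h1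
  have := M.noncross p hp (a, b) hab
  simp only at this
  omega

lemma dnat_right (M : CPM n) {a b : ℕ} (hab : (a, b) ∈ M.arcs) :
    dnat M b = dnat M (a-1) := by
  have hltab := M.lt _ hab
  have ha1 := (ep1 hab).1
  simp only at hltab ha1
  unfold dnat
  congr 1
  ext p
  simp only [Finset.mem_filter]
  constructor
  · rintro ⟨hpa, hp1, hp2⟩
    have hpab : p ≠ (a, b) := by
      intro hh; subst hh; omega
    have h1a : p.1 ≠ a := fun hh => hpab (shared hpa hab (Or.inl rfl) (Or.inl hh))
    have h1b : p.1 ≠ b := fun hh => hpab (shared hpa hab (Or.inl rfl) (Or.inr hh))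
    have h1lta : p.1 < a := by
      by_contra hc
      have := M.noncross (a, b) hab p hpa
      simp only at this
      omega
    refine ⟨hpa, by omega, ?_⟩
    have := outer hab hpa h1lta (by omega)
    omega
  · rintro ⟨hpa, hp1, hp2⟩
    have := outer hab hpa (by omega) (by omega)
    exact ⟨hpa, by omega, this⟩

lemma dnat_mid (M : CPM n) {a b c : ℕ} (hab : (a, b) ∈ M.arcs)
    (hc1 : a ≤ c) (hc2 : c < b) : dnat M (a-1) + 1 ≤ dnat M c := by
  have ha1 := (ep1 hab).1
  simp only at ha1
  unfold dnat
  have hsub : insert (a, b) (M.arcs.filter (fun p => p.1 ≤ a-1 ∧ a-1 < p.2))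
      ⊆ M.arcs.filter (fun p => p.1 ≤ c ∧ c < p.2) := by
    intro p hp
    simp only [Finset.mem_insert, Finset.mem_filter] at hp ⊢
    rcases hp with hp | ⟨hpa, hp1, hp2⟩
    · subst hp; exact ⟨hab, hc1, hc2⟩
    · have := outer hab hpa (by omega) (by omega)
      exact ⟨hpa, by omega, by omega⟩
  have hcard := Finset.card_le_card hsub
  rw [Finset.card_insert_of_notMem] at hcard
  · omega
  · simp only [Finset.mem_filter, not_and]
    intro _ h
    omega

/-- A left endpoint can be recognized from the depth function. -/
lemma left_endpoint_up (M : CPM n) {a b : ℕ} (hab : (a, b) ∈ M.arcs) :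
    dnat M a = dnat M (a-1) + 1 := by
  have ha := ep1 hab
  have hlt := M.lt _ hab
  simp only at ha hlt
  rcases step M a ha.1 ha.2 with ⟨b', -, hs⟩ | ⟨a', ha', hs⟩
  · exact hs
  · exfalso
    have := shared ha' hab (Or.inr rfl) (Or.inl rfl)
    rw [Prod.ext_iff] at this
    have hlt' := M.lt _ ha'
    simp only at this hlt'
    omega

lemma up_left_endpoint (M : CPM n) {a : ℕ} (h1 : 1 ≤ a) (h2 : a ≤ 2*n)
    (h : dnat M (a-1) < dnat M a) : ∃ b, (a, b) ∈ M.arcs := by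
  rcases step M a h1 h2 with ⟨b, hb, -⟩ | ⟨a', -, hs⟩
  · exact ⟨b, hb⟩
  · omega

lemma down_right_endpoint (M : CPM n) {a : ℕ} (h1 : 1 ≤ a) (h2 : a ≤ 2*n)
    (h : dnat M a < dnat M (a-1)) : ∃ j, (j, a) ∈ M.arcs := by
  rcases step M a h1 h2 with ⟨b, -, hs⟩ | ⟨a', ha', -⟩
  · omega
  · exact ⟨a', ha'⟩

/-- The matching is determined by its depth function. -/
lemma arcs_subset_of_dnat_eq {M M' : CPM n} (h : ∀ m, dnat M m = dnat M' m) :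
    M.arcs ⊆ M'.arcs := by
  intro p hp
  obtain ⟨a, b⟩ := p
  have hlt := M.lt _ hp
  have ha := ep1 hp
  have hb := ep2 hp
  simp only at hlt ha hb
  have hup : dnat M a = dnat M (a-1) + 1 := left_endpoint_up M hp
  obtain ⟨b', hb'⟩ := up_left_endpoint M' ha.1 ha.2 (by rw [← h, ← h]; omega)
  have hlt' := M'.lt _ hb'
  have hbb' := (ep2 hb').2
  simp only at hlt' hbb'
  -- b = b'
  rcases lt_trichotomy b b' with hc | hc | hc
  · exfalso
    have h1 := dnat_mid M' hb' (le_of_lt hlt) hc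
    have h2 := dnat_right M hp
    rw [h, h] at h2
    omega
  · rw [← hc] at hb'; exact hb'
  · exfalso
    have h1 := dnat_mid M hp (le_of_lt hlt') hc
    have h2 := dnat_right M' hb'
    rw [← h, ← h] at h2
    omega

lemma cpm_ext {M M' : CPM n} (h : M.arcs = M'.arcs) : M = M' := by
  cases M; cases M'; simp_all

lemma eq_of_dnat_eq {M M' : CPM n} (h : ∀ m, dnat M m = dnat M' m) : M = M' := by
  apply cpm_ext
  apply Finset.Subset.antisymm (arcs_subset_of_dnat_eq h)
  exact arcs_subset_of_dnat_eq (fun m => (h m).symm)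

end CPMaux

section
variable {n : ℕ}
open CPMaux

lemma memiff' {n : ℕ} (M : CPM n) (j i k : ℕ) (p : ℕ × ℕ) :
    p ∈ (M.arcs \ {(j, i), (i + 1, k)}) ∪ {(j, k), (i, i + 1)}
    ↔ (p ∈ M.arcs ∧ p ≠ (j, i) ∧ p ≠ (i + 1, k)) ∨ p = (j, k) ∨ p = (i, i + 1) := by
  simp only [Finset.mem_union, Finset.mem_sdiff, Finset.mem_insert,
    Finset.mem_singleton, not_or]

/-- The matching obtained by a covering move. -/
def coverCPM (M : CPM n) (j i k : ℕ) (hji : j < i) (hik : i + 1 < k)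
    (hjm : (j, i) ∈ M.arcs) (hmk : (i + 1, k) ∈ M.arcs) : CPM n where
  arcs := (M.arcs \ {(j, i), (i + 1, k)}) ∪ {(j, k), (i, i + 1)}
  lt := by
    intro p hp
    rcases (memiff' M j i k p).mp hp with ⟨hp, -⟩ | rfl | rfl
    · exact M.lt p hp
    · show j < k; omega
    · show i < i + 1; omega
  endpoints_mem := by
    intro p hp
    have h1 := M.endpoints_mem _ hjm
    have h2 := M.endpoints_mem _ hmk
    have h1a : 1 ≤ j ∧ j ≤ 2*n := Finset.mem_Icc.mp h1.1
    have h1b : 1 ≤ i ∧ i ≤ 2*n := Finset.mem_Icc.mp h1.2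
    have h2a : 1 ≤ i+1 ∧ i+1 ≤ 2*n := Finset.mem_Icc.mp h2.1
    have h2b : 1 ≤ k ∧ k ≤ 2*n := Finset.mem_Icc.mp h2.2
    rcases (memiff' M j i k p).mp hp with ⟨hp, -⟩ | rfl | rfl
    · exact M.endpoints_mem p hp
    · exact ⟨h1.1, h2.2⟩
    · exact ⟨h1.2, h2.1⟩
  cover := by
    intro x hx
    have hj1 : 1 ≤ j ∧ j ≤ 2*n := ep1 hjm
    have hi2 : 1 ≤ i ∧ i ≤ 2*n := ep2 hjm
    have hi1 : 1 ≤ i+1 ∧ i+1 ≤ 2*n := ep1 hmk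
    have hk2 : 1 ≤ k ∧ k ≤ 2*n := ep2 hmk
    by_cases hxj : x = j
    · refine ⟨(j, k), ⟨(memiff' M j i k _).mpr (Or.inr (Or.inl rfl)), Or.inl hxj⟩, ?_⟩
      rintro q ⟨hq, hxq⟩
      rcases (memiff' M j i k q).mp hq with ⟨hq, hq1, hq2⟩ | rfl | rfl
      · exact absurd (shared hq hjm hxq (Or.inl hxj)) hq1
      · rfl
      · exfalso
        rcases hxq with h | h
        · have h' : x = i := h; omega
        · have h' : x = i + 1 := h; omega
    · by_cases hxi : x = i
      · refine ⟨(i, i+1), ⟨(memiff' M j i k _).mpr (Or.inr (Or.inr rfl)), Or.inl hxi⟩, ?_⟩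
        rintro q ⟨hq, hxq⟩
        rcases (memiff' M j i k q).mp hq with ⟨hq, hq1, hq2⟩ | rfl | rfl
        · exact absurd (shared hq hjm hxq (Or.inr hxi)) hq1
        · exfalso
          rcases hxq with h | h
          · have h' : x = j := h; omega
          · have h' : x = k := h; omega
        · rfl
      · by_cases hxi1 : x = i + 1
        · refine ⟨(i, i+1), ⟨(memiff' M j i k _).mpr (Or.inr (Or.inr rfl)), Or.inr hxi1⟩, ?_⟩
          rintro q ⟨hq, hxq⟩
          rcases (memiff' M j i k q).mp hq with ⟨hq, hq1, hq2⟩ | rfl | rfl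
          · exact absurd (shared hq hmk hxq (Or.inl hxi1)) hq2
          · exfalso
            rcases hxq with h | h
            · have h' : x = j := h; omega
            · have h' : x = k := h; omega
          · rfl
        · by_cases hxk : x = k
          · refine ⟨(j, k), ⟨(memiff' M j i k _).mpr (Or.inr (Or.inl rfl)), Or.inr hxk⟩, ?_⟩
            rintro q ⟨hq, hxq⟩
            rcases (memiff' M j i k q).mp hq with ⟨hq, hq1, hq2⟩ | rfl | rfl
            · exact absurd (shared hq hmk hxq (Or.inr hxk)) hq2
            · rfl
            · exfalso
              rcases hxq with h | h
              · have h' : x = i := h; omega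
              · have h' : x = i + 1 := h; omega
          · obtain ⟨p0, ⟨hp0, hxp0⟩, hu⟩ := M.cover x hx
            have hp0ji : p0 ≠ (j, i) := by
              rintro rfl
              rcases hxp0 with h | h
              · exact hxj h
              · exact hxi h
            have hp0ik : p0 ≠ (i + 1, k) := by
              rintro rfl
              rcases hxp0 with h | h
              · exact hxi1 h
              · exact hxk h
            refine ⟨p0, ⟨(memiff' M j i k _).mpr (Or.inl ⟨hp0, hp0ji, hp0ik⟩), hxp0⟩, ?_⟩
            rintro q ⟨hq, hxq⟩
            rcases (memiff' M j i k q).mp hq with ⟨hq, -, -⟩ | rfl | rfl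
            · exact hu q ⟨hq, hxq⟩
            · exfalso
              rcases hxq with h | h
              · exact hxj h
              · exact hxk h
            · exfalso
              rcases hxq with h | h
              · exact hxi h
              · exact hxi1 h
  noncross := by
    intro p hp q hq
    have hltjm : j < i := M.lt _ hjm
    have hltmk : i + 1 < k := M.lt _ hmk
    rcases (memiff' M j i k q).mp hq with ⟨hq, hq1, hq2⟩ | rfl | rfl
    · rcases (memiff' M j i k p).mp hp with ⟨hp, hp1, hp2⟩ | rfl | rfl
      · exact M.noncross p hp q hq
      · -- p = (j,k), q old
        rintro ⟨c1, c2, c3⟩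
        have c1' : j < q.1 := c1
        have c2' : q.1 < k := c2
        have c3' : k < q.2 := c3
        have hq1m : q.1 ≠ i := fun hh => hq1 (shared hq hjm (Or.inl rfl) (Or.inr hh))
        have hq1m1 : q.1 ≠ i + 1 := fun hh => hq2 (shared hq hmk (Or.inl rfl) (Or.inl hh))
        rcases lt_trichotomy q.1 i with hlt | heq | hgt
        · exact M.noncross (j, i) hjm q hq ⟨c1', hlt, by omega⟩
        · exact hq1m heq
        · exact M.noncross (i+1, k) hmk q hq ⟨by omega, c2', c3'⟩
      · rintro ⟨c1, c2, c3⟩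
        have c1' : i < q.1 := c1
        have c2' : q.1 < i + 1 := c2
        omega
    · -- q = (j,k)
      rcases (memiff' M j i k p).mp hp with ⟨hp, hp1, hp2⟩ | rfl | rfl
      · rintro ⟨c1, c2, c3⟩
        have c1' : p.1 < j := c1
        have c2' : j < p.2 := c2
        have c3' : p.2 < k := c3
        have hp2m : p.2 ≠ i := fun hh => hp1 (shared hp hjm (Or.inr rfl) (Or.inr hh))
        have hp2m1 : p.2 ≠ i + 1 := fun hh => hp2 (shared hp hmk (Or.inr rfl) (Or.inl hh))
        rcases lt_trichotomy p.2 i with hlt | heq | hgt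
        · exact M.noncross p hp (j, i) hjm ⟨c1', by omega, hlt⟩
        · exact hp2m heq
        · exact M.noncross p hp (i+1, k) hmk ⟨by omega, by omega, c3'⟩
      · rintro ⟨c1, c2, c3⟩
        have c1' : j < j := c1
        omega
      · rintro ⟨c1, c2, c3⟩
        have c1' : i < j := c1
        have c2' : j < i + 1 := c2
        omega
    · -- q = (i, i+1)
      rintro ⟨c1, c2, c3⟩
      have c1' : p.1 < i := c1
      have c2' : i < p.2 := c2
      have c3' : p.2 < i + 1 := c3
      omega

lemma coverCPM_dnat (M : CPM n) (j i k : ℕ) (hji : j < i) (hik : i + 1 < k)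
    (hjm : (j, i) ∈ M.arcs) (hmk : (i + 1, k) ∈ M.arcs) (x : ℕ) :
    dnat (coverCPM M j i k hji hik hjm hmk) x
      = if x = i then dnat M x + 2 else dnat M x := by
  have hjk : (j, k) ∉ M.arcs := by
    intro h
    have := shared h hjm (Or.inl rfl) (Or.inl rfl)
    have h2 : k = i := congrArg Prod.snd this
    omega
  have hii : (i, i+1) ∉ M.arcs := by
    intro h
    have := shared h hjm (Or.inl rfl) (Or.inr rfl)
    have h2 : i = j := congrArg Prod.fst this
    omega
  have hsub : ({(j, i), (i + 1, k)} : Finset (ℕ × ℕ)) ⊆ M.arcs := by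
    intro p hp
    simp only [Finset.mem_insert, Finset.mem_singleton] at hp
    rcases hp with rfl | rfl <;> assumption
  have hdisj : Disjoint (M.arcs \ {(j, i), (i + 1, k)}) ({(j, k), (i, i + 1)} : Finset (ℕ × ℕ)) := by
    rw [Finset.disjoint_right]
    intro p hp
    simp only [Finset.mem_insert, Finset.mem_singleton] at hp
    simp only [Finset.mem_sdiff, not_and]
    rcases hp with rfl | rfl <;> intro h <;> [exact absurd h hjk; exact absurd h hii]
  set w : ℕ × ℕ → ℕ := fun p => if p.1 ≤ x ∧ x < p.2 then 1 else 0 with hw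
  have hcards : ∀ s : Finset (ℕ × ℕ), (s.filter (fun p => p.1 ≤ x ∧ x < p.2)).card
      = ∑ p ∈ s, w p := by
    intro s
    rw [Finset.card_filter]
  have harcs : dnat (coverCPM M j i k hji hik hjm hmk) x
      = ∑ p ∈ (M.arcs \ {(j, i), (i + 1, k)}) ∪ {(j, k), (i, i + 1)}, w p := by
    unfold dnat
    rw [hcards]
    rfl
  have h1 : ∑ p ∈ M.arcs \ {(j, i), (i + 1, k)}, w p
      + ∑ p ∈ ({(j, i), (i + 1, k)} : Finset (ℕ × ℕ)), w p = ∑ p ∈ M.arcs, w p :=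
    Finset.sum_sdiff hsub
  have h2 : ∑ p ∈ ({(j, i), (i + 1, k)} : Finset (ℕ × ℕ)), w p = w (j, i) + w (i+1, k) := by
    refine Finset.sum_pair ?_
    intro hh
    have h' : j = i + 1 := congrArg Prod.fst hh
    omega
  have h3 : ∑ p ∈ ({(j, k), (i, i + 1)} : Finset (ℕ × ℕ)), w p = w (j, k) + w (i, i+1) := by
    refine Finset.sum_pair ?_
    intro hh
    have h' : j = i := congrArg Prod.fst hh
    omega
  have h4 : dnat M x = ∑ p ∈ M.arcs, w p := hcards M.arcs
  rw [harcs, Finset.sum_union hdisj, h3]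
  rw [h2] at h1
  have w1 : w (j, i) = if j ≤ x ∧ x < i then 1 else 0 := rfl
  have w2 : w (i+1, k) = if i+1 ≤ x ∧ x < k then 1 else 0 := rfl
  have w3 : w (j, k) = if j ≤ x ∧ x < k then 1 else 0 := rfl
  have w4 : w (i, i+1) = if i ≤ x ∧ x < i+1 then 1 else 0 := rfl
  rw [w3, w4]
  rw [w1, w2] at h1
  by_cases hxi : x = i
  · rw [if_pos hxi, if_pos (show j ≤ x ∧ x < k by omega),
      if_pos (show i ≤ x ∧ x < i + 1 by omega)]
    rw [if_neg (show ¬(j ≤ x ∧ x < i) by omega), if_neg (show ¬(i+1 ≤ x ∧ x < k) by omega)] at h1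
    omega
  · rw [if_neg hxi, if_neg (show ¬(i ≤ x ∧ x < i + 1) by omega)]
    rcases Nat.lt_or_ge x i with hlt | hge
    · by_cases hjx : j ≤ x
      · rw [if_pos (show j ≤ x ∧ x < k by omega)]
        rw [if_pos (show j ≤ x ∧ x < i by omega), if_neg (show ¬(i+1 ≤ x ∧ x < k) by omega)] at h1
        omega
      · rw [if_neg (show ¬(j ≤ x ∧ x < k) by omega)]
        rw [if_neg (show ¬(j ≤ x ∧ x < i) by omega), if_neg (show ¬(i+1 ≤ x ∧ x < k) by omega)] at h1
        omega
    · have hgt : i < x := by omega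
      by_cases hxk : x < k
      · rw [if_pos (show j ≤ x ∧ x < k by omega)]
        rw [if_neg (show ¬(j ≤ x ∧ x < i) by omega), if_pos (show i+1 ≤ x ∧ x < k by omega)] at h1
        omega
      · rw [if_neg (show ¬(j ≤ x ∧ x < k) by omega)]
        rw [if_neg (show ¬(j ≤ x ∧ x < i) by omega), if_neg (show ¬(i+1 ≤ x ∧ x < k) by omega)] at h1
        omega
end

section
variable {n : ℕ}
open CPMaux

lemma exists_move (M' M : CPM n) (hne : M ≠ M')
    (hle : ∀ m, dnat M m ≤ dnat M' m) :
    ∃ M'' : CPM n, CoverMove M M'' ∧ (∀ m, dnat M'' m ≤ dnat M' m) ∧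
      ∑ m ∈ Finset.range (2*n+1), dnat M'' m
        = ∑ m ∈ Finset.range (2*n+1), dnat M m + 2 := by
  have hstrict : ∃ m, dnat M m < dnat M' m := by
    by_contra hc
    push_neg at hc
    exact hne (eq_of_dnat_eq (fun m => le_antisymm (hle m) (hc m)))
  obtain ⟨m1, hm1⟩ := hstrict
  have hT : (Finset.filter (fun m => dnat M m < dnat M' m)
      (Finset.range (2*n+1))).Nonempty := by
    refine ⟨m1, Finset.mem_filter.mpr ⟨?_, hm1⟩⟩
    rw [Finset.mem_range]
    by_contra hc
    rw [dnat_big M (by omega), dnat_big M' (by omega)] at hm1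
    omega
  obtain ⟨i, hiT, hmin⟩ := Finset.exists_min_image _ (dnat M) hT
  rw [Finset.mem_filter, Finset.mem_range] at hiT
  obtain ⟨hirange, hilt⟩ := hiT
  have hi1 : 1 ≤ i := by
    rcases Nat.eq_zero_or_pos i with rfl | h
    · rw [dnat_zero M, dnat_zero M'] at hilt; omega
    · exact h
  have hi2n : i < 2*n := by
    by_contra hc
    rw [dnat_big M (by omega), dnat_big M' (by omega)] at hilt
    omega
  have hgap : dnat M i + 2 ≤ dnat M' i := by
    obtain ⟨u, hu⟩ := dnat_parity M i (by omega)
    obtain ⟨v, hv⟩ := dnat_parity M' i (by omega)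
    omega
  have hM'dec : dnat M' i ≤ dnat M' (i-1) + 1 := by
    rcases step M' i hi1 (by omega) with ⟨b, -, hs⟩ | ⟨a, -, hs⟩ <;> omega
  have hM'inc : dnat M' i ≤ dnat M' (i+1) + 1 := by
    rcases step M' (i+1) (by omega) (by omega) with ⟨b, -, hs⟩ | ⟨a, -, hs⟩ <;>
      simp only [Nat.add_sub_cancel] at hs <;> omega
  have hvalley1 : dnat M (i-1) = dnat M i + 1 := by
    rcases step M i hi1 (by omega) with ⟨b, -, hs⟩ | ⟨a, -, hs⟩
    · exfalso
      have hmem : i - 1 ∈ Finset.filter (fun m => dnat M m < dnat M' m)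
          (Finset.range (2*n+1)) := by
        rw [Finset.mem_filter, Finset.mem_range]
        constructor
        · omega
        · omega
      have := hmin (i-1) hmem
      omega
    · exact hs
  have hvalley2 : dnat M (i+1) = dnat M i + 1 := by
    rcases step M (i+1) (by omega) (by omega) with ⟨b, -, hs⟩ | ⟨a, -, hs⟩ <;>
      simp only [Nat.add_sub_cancel] at hs
    · exact hs
    · exfalso
      have hmem : i + 1 ∈ Finset.filter (fun m => dnat M m < dnat M' m)
          (Finset.range (2*n+1)) := by
        rw [Finset.mem_filter, Finset.mem_range]
        constructor
        · omega
        · omega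
      have := hmin (i+1) hmem
      omega
  obtain ⟨a, ha⟩ : ∃ a, (a, i) ∈ M.arcs :=
    down_right_endpoint M hi1 (by omega) (by omega)
  obtain ⟨b, hb⟩ : ∃ b, (i + 1, b) ∈ M.arcs := by
    refine up_left_endpoint M (a := i + 1) (by omega) (by omega) ?_
    simp only [Nat.add_sub_cancel]
    omega
  have hja : a < i := M.lt _ ha
  have hib : i + 1 < b := M.lt _ hb
  refine ⟨coverCPM M a i b hja hib ha hb, ⟨a, i, b, hja, hib, ha, hb, rfl⟩, ?_, ?_⟩
  · intro m
    rw [coverCPM_dnat]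
    split_ifs with hm
    · subst hm; omega
    · exact hle m
  · have hsc : ∀ m ∈ Finset.range (2*n+1),
        dnat (coverCPM M a i b hja hib ha hb) m
          = dnat M m + if m = i then 2 else 0 := by
      intro m _
      rw [coverCPM_dnat]
      split_ifs <;> omega
    rw [Finset.sum_congr rfl hsc, Finset.sum_add_distrib,
      Finset.sum_ite_eq' (Finset.range (2*n+1)) i (fun _ => 2),
      if_pos (Finset.mem_range.mpr (by omega))]

lemma chain_aux (M' : CPM n) : ∀ N : ℕ, ∀ M : CPM n,
    (∀ m, dnat M m ≤ dnat M' m) →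
    (∑ m ∈ Finset.range (2*n+1), dnat M' m
      ≤ ∑ m ∈ Finset.range (2*n+1), dnat M m + N) →
    ∃ (k : ℕ) (c : ℕ → CPM n), c 0 = M ∧ c k = M' ∧
      ∀ t < k, CoverMove (c t) (c (t + 1)) := by
  intro N
  induction N with
  | zero =>
    intro M hle hsum
    have hle' : ∑ m ∈ Finset.range (2*n+1), dnat M m
        ≤ ∑ m ∈ Finset.range (2*n+1), dnat M' m :=
      Finset.sum_le_sum (fun m _ => hle m)
    have heq0 := (Finset.sum_eq_sum_iff_of_le (fun m (_ : m ∈ Finset.range (2*n+1)) => hle m)).mp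
      (le_antisymm hle' (by omega))
    have heq : ∀ m, dnat M m = dnat M' m := by
      intro m
      by_cases hm : m < 2*n+1
      · exact heq0 m (Finset.mem_range.mpr hm)
      · rw [dnat_big M (by omega), dnat_big M' (by omega)]
    exact ⟨0, fun _ => M', by rw [eq_of_dnat_eq heq], rfl,
      fun t ht => absurd ht (Nat.not_lt_zero t)⟩
  | succ N ih =>
    intro M hle hsum
    by_cases hne : M = M'
    · exact ⟨0, fun _ => M', by rw [hne], rfl, fun t ht => absurd ht (Nat.not_lt_zero t)⟩
    · obtain ⟨M'', hmv, hle'', hsum''⟩ := exists_move M' M hne hle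
      obtain ⟨k, c, hc0, hck, hcstep⟩ := ih M'' hle'' (by omega)
      refine ⟨k+1, fun t => match t with | 0 => M | (t+1) => c t, rfl, hck, ?_⟩
      intro t ht
      match t with
      | 0 =>
        show CoverMove M (c 0)
        rw [hc0]
        exact hmv
      | (t+1) => exact hcstep t (by omega)

end

/-- Shadow containment implies the tableau partial order for `sl₂` webs:
if `M ≠ M'` and the depth of `M` is pointwise at most that of `M'`, then `M'`
can be reached from `M` by a chain of covering moves. -/
theorem chain_of_shadow_subset (n : ℕ) (M M' : CPM n) (hne : M ≠ M')
    (hle : ∀ x : ℝ, depth M x ≤ depth M' x) :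
    ∃ (k : ℕ) (c : ℕ → CPM n), c 0 = M ∧ c k = M' ∧
      ∀ t < k, CoverMove (c t) (c (t + 1)) := by
  have hle' : ∀ m : ℕ, CPMaux.dnat M m ≤ CPMaux.dnat M' m := fun m => by
    have := hle ((m : ℝ) + 1/2)
    rwa [CPMaux.depth_half, CPMaux.depth_half] at this
  exact chain_aux M' (∑ m ∈ Finset.range (2*n+1), CPMaux.dnat M' m) M hle' (by omega)
end

section
/- Let M be a crossingless perfect matching on {1,...,2n} and M' obtained from M by the covering move replacing arcs (j,i),(i+1,k) (j<i<i+1<k) with (j,k),(i,i+1). Then depth_{M'}(x) = depth_M(x) for all x outside the open interval (i,i+1), and depth_{M'}(x) = depth_M(x) + 2 for x in (i,i+1). In particular depth_M(x) ≤ depth_{M'}(x) everywhere. -/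
/-- Under the covering move replacing arcs `(j, i)`, `(i+1, k)` (with
`j < i < i+1 < k`) by `(j, k)`, `(i, i+1)`, the depth is unchanged at every
non-endpoint `x` outside the open interval `(i, i+1)`, increases by exactly
`2` inside `(i, i+1)`, and in particular never decreases. -/
theorem depth_coverMove (n : ℕ) (M M' : CPM n) (j i k : ℕ)
    (hji : j < i) (hik : i + 1 < k)
    (h1 : (j, i) ∈ M.arcs) (h2 : (i + 1, k) ∈ M.arcs)
    (harcs : M'.arcs = (M.arcs \ {(j, i), (i + 1, k)}) ∪ {(j, k), (i, i + 1)}) :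
    (∀ x : ℝ, (∀ m : ℕ, x ≠ (m : ℝ)) → (x ≤ (i : ℝ) ∨ (i : ℝ) + 1 ≤ x) →
      depth M' x = depth M x) ∧
    (∀ x : ℝ, (i : ℝ) < x → x < (i : ℝ) + 1 → depth M' x = depth M x + 2) ∧
    (∀ x : ℝ, (∀ m : ℕ, x ≠ (m : ℝ)) → depth M x ≤ depth M' x) := by
  classical
  -- depth as a filter cardinality
  have hdepth : ∀ (N : CPM n) (x : ℝ),
      depth N x = (N.arcs.filter (fun p => (p.1:ℝ) < x ∧ x < (p.2:ℝ))).card := by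
    intro N x
    have hset : {p : ℕ × ℕ | p ∈ N.arcs ∧ (p.1:ℝ) < x ∧ x < (p.2:ℝ)}
        = ↑(N.arcs.filter (fun p => (p.1:ℝ) < x ∧ x < (p.2:ℝ))) := by
      ext p; simp
    rw [depth, show {p : ℕ × ℕ // p ∈ N.arcs ∧ (p.1:ℝ) < x ∧ x < (p.2:ℝ)}
        = ↥{p : ℕ × ℕ | p ∈ N.arcs ∧ (p.1:ℝ) < x ∧ x < (p.2:ℝ)} from rfl,
      Nat.card_coe_set_eq, hset, Set.ncard_coe_finset]
  -- (j,k) ∉ M.arcs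
  have hjk : (j, k) ∉ M.arcs := by
    intro h
    obtain ⟨p, -, hu⟩ := M.cover j (M.endpoints_mem _ h1).1
    have e1 := hu (j, i) ⟨h1, Or.inl rfl⟩
    have e2 := hu (j, k) ⟨h, Or.inl rfl⟩
    have : k = i := congrArg Prod.snd (e2.trans e1.symm)
    omega
  -- (i,i+1) ∉ M.arcs
  have hii : (i, i + 1) ∉ M.arcs := by
    intro h
    obtain ⟨p, -, hu⟩ := M.cover i (M.endpoints_mem _ h1).2
    have e1 := hu (j, i) ⟨h1, Or.inr rfl⟩
    have e2 := hu (i, i + 1) ⟨h, Or.inl rfl⟩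
    have : i = j := congrArg Prod.fst (e2.trans e1.symm)
    omega
  set A₀ : Finset (ℕ × ℕ) := M.arcs \ {(j, i), (i + 1, k)} with hA₀
  have hsub : ({(j, i), (i + 1, k)} : Finset (ℕ × ℕ)) ⊆ M.arcs := by
    intro p hp
    simp only [Finset.mem_insert, Finset.mem_singleton] at hp
    rcases hp with rfl | rfl <;> assumption
  have hM : M.arcs = A₀ ∪ {(j, i), (i + 1, k)} := (Finset.sdiff_union_of_subset hsub).symm
  have hne1 : ((j, i) : ℕ × ℕ) ≠ (i + 1, k) := by
    intro h; have := congrArg Prod.fst h; simp at this; omega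
  have hne2 : ((j, k) : ℕ × ℕ) ≠ (i, i + 1) := by
    intro h; have := congrArg Prod.snd h; simp at this; omega
  have hjkA : (j, k) ∉ A₀ := fun h => hjk (Finset.mem_sdiff.mp h).1
  have hiiA : (i, i + 1) ∉ A₀ := fun h => hii (Finset.mem_sdiff.mp h).1
  -- counting over union with a pair
  have pairc : ∀ (a b : ℕ × ℕ), a ≠ b → a ∉ A₀ → b ∉ A₀ →
      ∀ (Q : ℕ × ℕ → Prop) [DecidablePred Q],
      ((A₀ ∪ {a, b}).filter Q).card = (A₀.filter Q).card
        + ((if Q a then 1 else 0) + (if Q b then 1 else 0)) := by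
    intro a b hab ha hb Q _
    rw [Finset.filter_union, Finset.card_union_of_disjoint, Finset.filter_insert,
      Finset.filter_singleton]
    · congr 1
      split_ifs <;> simp [Finset.card_insert_of_notMem, hab, *]
    · exact Finset.disjoint_filter_filter (Finset.disjoint_left.mpr
        (by intro p hp hmem
            simp only [Finset.mem_insert, Finset.mem_singleton] at hmem
            rcases hmem with rfl | rfl
            exacts [ha hp, hb hp]))
  have hjA : (j, i) ∉ A₀ := by simp [hA₀]
  have hkA : (i + 1, k) ∉ A₀ := by simp [hA₀]
  have key : ∀ x : ℝ,
      depth M x = (A₀.filter (fun p => (p.1:ℝ) < x ∧ x < (p.2:ℝ))).card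
        + ((if (j:ℝ) < x ∧ x < (i:ℝ) then 1 else 0)
          + (if ((i:ℝ)+1) < x ∧ x < (k:ℝ) then 1 else 0)) ∧
      depth M' x = (A₀.filter (fun p => (p.1:ℝ) < x ∧ x < (p.2:ℝ))).card
        + ((if (j:ℝ) < x ∧ x < (k:ℝ) then 1 else 0)
          + (if (i:ℝ) < x ∧ x < ((i:ℝ)+1) then 1 else 0)) := by
    intro x
    constructor
    · rw [hdepth, hM, pairc _ _ hne1 hjA hkA]
      push_cast
      ring_nf
    · rw [hdepth, harcs, pairc _ _ hne2 hjkA hiiA]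
      push_cast
      ring_nf
  have hmain1 : ∀ x : ℝ, (∀ m : ℕ, x ≠ (m : ℝ)) → (x ≤ (i : ℝ) ∨ (i : ℝ) + 1 ≤ x) →
      depth M' x = depth M x := by
    intro x hx hcase
    obtain ⟨e1, e2⟩ := key x
    rw [e1, e2]
    congr 1
    rcases hcase with hc | hc
    · have hxi : x < (i:ℝ) := lt_of_le_of_ne hc (hx i)
      have hik' : (i:ℝ) < (k:ℝ) := by exact_mod_cast Nat.lt_of_succ_lt hik
      have : ¬(((i:ℝ)+1) < x ∧ x < (k:ℝ)) := by
        rintro ⟨h, -⟩; linarith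
      have h4 : ¬((i:ℝ) < x ∧ x < ((i:ℝ)+1)) := by
        rintro ⟨h, -⟩; linarith
      simp only [if_neg this, if_neg h4]
      congr 1
      by_cases hj : (j:ℝ) < x
      · rw [if_pos ⟨hj, by linarith⟩, if_pos ⟨hj, hxi⟩]
      · rw [if_neg (fun h => hj h.1), if_neg (fun h => hj h.1)]
    · have hxi : ((i:ℝ)+1) < x := by
        have := hx (i+1); push_cast at this
        exact lt_of_le_of_ne hc (Ne.symm this)
      have hji' : (j:ℝ) < (i:ℝ) := by exact_mod_cast hji
      have h1' : ¬((j:ℝ) < x ∧ x < (i:ℝ)) := by rintro ⟨-, h⟩; linarith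
      have h4 : ¬((i:ℝ) < x ∧ x < ((i:ℝ)+1)) := by rintro ⟨-, h⟩; linarith
      simp only [if_neg h1', if_neg h4]
      by_cases hk : x < (k:ℝ)
      · rw [if_pos ⟨by linarith, hk⟩, if_pos ⟨by linarith, hk⟩]
      · rw [if_neg (fun h => hk h.2), if_neg (fun h => hk h.2)]
  have hmain2 : ∀ x : ℝ, (i : ℝ) < x → x < (i : ℝ) + 1 → depth M' x = depth M x + 2 := by
    intro x hlo hhi
    obtain ⟨e1, e2⟩ := key x
    rw [e1, e2]
    have hji' : (j:ℝ) < (i:ℝ) := by exact_mod_cast hji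
    have hik' : ((i:ℝ)+1) < (k:ℝ) := by exact_mod_cast hik
    have c1 : ¬((j:ℝ) < x ∧ x < (i:ℝ)) := fun h => absurd h.2 (not_lt.mpr hlo.le)
    have c2 : ¬(((i:ℝ)+1) < x ∧ x < (k:ℝ)) := fun h => absurd h.1 (not_lt.mpr hhi.le)
    have c3 : ((j:ℝ) < x ∧ x < (k:ℝ)) := ⟨by linarith, by linarith⟩
    have c4 : ((i:ℝ) < x ∧ x < ((i:ℝ)+1)) := ⟨hlo, hhi⟩
    rw [if_neg c1, if_neg c2, if_pos c3, if_pos c4]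
  refine ⟨hmain1, hmain2, ?_⟩
  intro x hx
  rcases lt_trichotomy x ((i:ℝ)) with h | h | h
  · exact (hmain1 x hx (Or.inl h.le)).ge
  · exact absurd h (hx i)
  · rcases lt_trichotomy x ((i:ℝ)+1) with h2 | h2 | h2
    · rw [hmain2 x h h2]; omega
    · exact absurd (by push_cast; exact h2) (hx (i+1))
    · exact (hmain1 x hx (Or.inr h2.le)).ge
end

section
/- Let T be a standard Young tableau of rectangular shape with rows of equal length, and suppose i lies in a strictly lower row than i+1 in T. Then the tableau s_i·T obtained by swapping the entries i and i+1 is again a standard Young tableau, and the number of descents in the column reading word of s_i·T is one more than the number of descents in the column reading word of T. -/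
/-- A standard Young tableau of rectangular shape with `k` rows and `n`
columns: a filling of the `k × n` grid with the numbers `1, ..., k*n`, each
occurring exactly once, increasing along rows (left to right) and down
columns. -/
structure SYTRect (k n : ℕ) where
  entry : Fin k → Fin n → ℕ
  mem_Icc : ∀ r c, entry r c ∈ Finset.Icc 1 (k * n)
  inj : ∀ r₁ c₁ r₂ c₂, entry r₁ c₁ = entry r₂ c₂ → r₁ = r₂ ∧ c₁ = c₂
  row_lt : ∀ (r : Fin k) (c₁ c₂ : Fin n), c₁ < c₂ → entry r c₁ < entry r c₂
  col_lt : ∀ (r₁ r₂ : Fin k) (c : Fin n), r₁ < r₂ → entry r₁ c < entry r₂ c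

/-- The position of the cell `(r, c)` in the column reading word of a
rectangular tableau with `k` rows (columns read left to right, each column
top to bottom). -/
def colPos {k n : ℕ} (p : Fin k × Fin n) : ℕ := (p.2 : ℕ) * k + (p.1 : ℕ)

/-- The rank of a rectangular standard Young tableau: the number of pairs of
values `a < b` such that `b` appears before `a` in the column reading word,
counted here as pairs of cells. -/
noncomputable def tabRank {k n : ℕ} (T : SYTRect k n) : ℕ :=
  Nat.card {q : (Fin k × Fin n) × (Fin k × Fin n) //
    T.entry q.1.1 q.1.2 < T.entry q.2.1 q.2.2 ∧ colPos q.2 < colPos q.1}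

/-- If `i` lies in a strictly lower row than `i+1` in a rectangular standard
Young tableau `T`, then swapping the entries `i` and `i+1` yields again a
standard Young tableau, whose number of column-word descents (inversions) is
one more than that of `T`. -/
theorem swap_rank_succ (k n : ℕ) (T : SYTRect k n) (i : ℕ)
    (r₁ r₂ : Fin k) (c₁ c₂ : Fin n)
    (h₁ : T.entry r₁ c₁ = i) (h₂ : T.entry r₂ c₂ = i + 1) (hrow : r₂ < r₁) :
    ∃ T' : SYTRect k n,
      (∀ r c, T'.entry r c =
        if T.entry r c = i then i + 1
        else if T.entry r c = i + 1 then i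
        else T.entry r c) ∧
      tabRank T' = tabRank T + 1 := by
  classical
  have hi1 : 1 ≤ i := by
    have := T.mem_Icc r₁ c₁; rw [Finset.mem_Icc] at this; omega
  have hikn : i + 1 ≤ k * n := by
    have := T.mem_Icc r₂ c₂; rw [Finset.mem_Icc] at this; omega
  have hP : ∀ r c, T.entry r c = i → r = r₁ ∧ c = c₁ :=
    fun r c h => T.inj r c r₁ c₁ (by omega)
  have hQ : ∀ r c, T.entry r c = i + 1 → r = r₂ ∧ c = c₂ :=
    fun r c h => T.inj r c r₂ c₂ (by omega)
  have hc : c₁ < c₂ := by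
    by_contra h
    push_neg at h
    have h3 : T.entry r₂ c₂ ≤ T.entry r₂ c₁ := by
      rcases lt_or_eq_of_le h with h' | h'
      · exact (T.row_lt r₂ c₂ c₁ h').le
      · rw [h']
    have h4 := T.col_lt r₂ r₁ c₁ hrow
    omega
  set f : Fin k → Fin n → ℕ := fun r c =>
    if T.entry r c = i then i + 1
    else if T.entry r c = i + 1 then i
    else T.entry r c with hf
  have hcomp : ∀ ra ca rb cb, f ra ca < f rb cb ↔
      ((T.entry ra ca < T.entry rb cb ∧
        ¬(T.entry ra ca = i ∧ T.entry rb cb = i + 1)) ∨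
       (T.entry ra ca = i + 1 ∧ T.entry rb cb = i)) := by
    intro ra ca rb cb
    simp only [hf]
    split_ifs <;> omega
  have hIcc : ∀ r c, f r c ∈ Finset.Icc 1 (k * n) := by
    intro r c
    have := T.mem_Icc r c
    rw [Finset.mem_Icc] at this ⊢
    simp only [hf]
    split_ifs <;> omega
  have hinj : ∀ ra ca rb cb, f ra ca = f rb cb → ra = rb ∧ ca = cb := by
    intro ra ca rb cb h
    simp only [hf] at h
    split_ifs at h <;> exact T.inj _ _ _ _ (by omega)
  have hrowlt : ∀ (r : Fin k) (ca cb : Fin n), ca < cb → f r ca < f r cb := by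
    intro r ca cb hlt
    rw [hcomp]
    refine Or.inl ⟨T.row_lt r ca cb hlt, ?_⟩
    rintro ⟨ha, hb⟩
    obtain ⟨e1, e2⟩ := hP _ _ ha
    obtain ⟨e3, e4⟩ := hQ _ _ hb
    have : r₁ = r₂ := e1.symm.trans e3
    rw [this] at hrow
    exact lt_irrefl _ hrow
  have hcollt : ∀ (ra rb : Fin k) (c : Fin n), ra < rb → f ra c < f rb c := by
    intro ra rb c hlt
    rw [hcomp]
    refine Or.inl ⟨T.col_lt ra rb c hlt, ?_⟩
    rintro ⟨ha, hb⟩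
    obtain ⟨e1, e2⟩ := hP _ _ ha
    obtain ⟨e3, e4⟩ := hQ _ _ hb
    rw [e1, e3] at hlt
    exact lt_irrefl _ (hlt.trans hrow)
  have hPQ : colPos ((r₁, c₁) : Fin k × Fin n) < colPos ((r₂, c₂) : Fin k × Fin n) := by
    simp only [colPos]
    have hk : (r₁ : ℕ) < k := r₁.isLt
    have hc' : (c₁ : ℕ) < (c₂ : ℕ) := hc
    have h5 : (c₁ : ℕ) * k + k ≤ (c₂ : ℕ) * k := by
      calc (c₁ : ℕ) * k + k = ((c₁ : ℕ) + 1) * k := by ring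
        _ ≤ (c₂ : ℕ) * k := Nat.mul_le_mul_right _ (by omega)
    omega
  have hcard : ∀ (S : SYTRect k n), tabRank S =
      (Finset.univ.filter (fun q : (Fin k × Fin n) × (Fin k × Fin n) =>
        S.entry q.1.1 q.1.2 < S.entry q.2.1 q.2.2 ∧ colPos q.2 < colPos q.1)).card := by
    intro S
    rw [tabRank, Nat.card_eq_fintype_card, Fintype.card_subtype]
  have hset : (Finset.univ.filter (fun q : (Fin k × Fin n) × (Fin k × Fin n) =>
        f q.1.1 q.1.2 < f q.2.1 q.2.2 ∧ colPos q.2 < colPos q.1)) =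
      insert ((r₂, c₂), (r₁, c₁))
        (Finset.univ.filter (fun q : (Fin k × Fin n) × (Fin k × Fin n) =>
          T.entry q.1.1 q.1.2 < T.entry q.2.1 q.2.2 ∧ colPos q.2 < colPos q.1)) := by
    ext ⟨⟨ra, ca⟩, ⟨rb, cb⟩⟩
    simp only [Finset.mem_filter, Finset.mem_insert, Finset.mem_univ, true_and,
      Prod.mk.injEq]
    rw [hcomp]
    constructor
    · rintro ⟨h | ⟨ha, hb⟩, hpos⟩
      · exact Or.inr ⟨h.1, hpos⟩
      · obtain ⟨e1, e2⟩ := hQ _ _ ha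
        obtain ⟨e3, e4⟩ := hP _ _ hb
        exact Or.inl ⟨⟨e1, e2⟩, ⟨e3, e4⟩⟩
    · rintro (⟨⟨e1, e2⟩, ⟨e3, e4⟩⟩ | ⟨hlt, hpos⟩)
      · subst e1; subst e2; subst e3; subst e4
        exact ⟨Or.inr ⟨h₂, h₁⟩, hPQ⟩
      · refine ⟨Or.inl ⟨hlt, ?_⟩, hpos⟩
        rintro ⟨ha, hb⟩
        obtain ⟨e1, e2⟩ := hP _ _ ha
        obtain ⟨e3, e4⟩ := hQ _ _ hb
        subst e1; subst e2; subst e3; subst e4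
        exact hPQ.asymm hpos
  have hnot : (((r₂, c₂), (r₁, c₁)) : (Fin k × Fin n) × (Fin k × Fin n)) ∉
      Finset.univ.filter (fun q : (Fin k × Fin n) × (Fin k × Fin n) =>
        T.entry q.1.1 q.1.2 < T.entry q.2.1 q.2.2 ∧ colPos q.2 < colPos q.1) := by
    simp only [Finset.mem_filter, Finset.mem_univ, true_and, not_and]
    intro h
    rw [h₁, h₂] at h
    omega
  have hkey : (Finset.univ.filter (fun q : (Fin k × Fin n) × (Fin k × Fin n) =>
        f q.1.1 q.1.2 < f q.2.1 q.2.2 ∧ colPos q.2 < colPos q.1)).card =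
      (Finset.univ.filter (fun q : (Fin k × Fin n) × (Fin k × Fin n) =>
        T.entry q.1.1 q.1.2 < T.entry q.2.1 q.2.2 ∧ colPos q.2 < colPos q.1)).card + 1 := by
    rw [hset, Finset.card_insert_of_notMem hnot]
  refine ⟨⟨f, hIcc, hinj, hrowlt, hcollt⟩, fun r c => rfl, ?_⟩
  rw [hcard, hcard]
  exact hkey
end
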